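/- Let 1 < q < ∞, let G : (0,∞) → [0,∞) be measurable and locally integrable (so that ∫₀^r G(s) ds < ∞ for every r > 0), and let W : (0,∞) → [0,∞] be measurable. Then ∫₀^∞ W(r) (∫₀^r G(s) ds)^q dr = q ∫₀^∞ G(s) (∫₀^s G(r) dr)^{q-1} (∫_s^∞ W(r) dr) ds, where both sides are interpreted as (possibly infinite) Lebesgue integrals with values in [0,∞]. -/

import Mathlib

open MeasureTheory Set ENNReal Filter Topology

/-!
Write `Φ r = ∫₀^r G` and `ν = G ds`. Since `ν` has no atoms, `Φ` is continuous, so by the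
intermediate value theorem `ν {s ∈ (0, r] | t < Φ s} = Φ r - t`: under `ν` restricted to `(0, r]`,
`Φ` is distributed like the identity under Lebesgue measure on `(0, Φ r]`. The layer-cake formula
then gives `Φ r ^ q = q ∫₀^r G Φ^(q-1)`, and Tonelli on the triangle `0 < s ≤ r` moves `W`
inside.
-/

/-- The mass of an interval of radius `|y - x|` around `x` bounds `|μ (Iic y) - μ (Iic x)|`. -/
theorem continuous_measure_Iic {μ : Measure ℝ} [IsFiniteMeasure μ] [NullSingletonClass μ] :
    Continuous fun x => μ (Iic x) := by
  refine continuous_iff_continuousAt.2 fun x => ?_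
  set I : ℝ → Set ℝ := fun y => Icc (x - |y - x|) (x + |y - x|)
  have hI : Tendsto (fun y => μ (I y)) (𝓝 x) (𝓝 0) :=
    (tendsto_measure_Icc μ x).comp <| by simpa using (continuous_sub_right x).abs.tendsto x
  have hcover : ∀ y, ∀ a ∈ I y, ∀ b ∈ I y, μ (Iic a) ≤ μ (Iic b) + μ (I y) := by
    intro y a ha b hb
    refine (measure_mono fun z (hz : z ≤ a) => ?_).trans (measure_union_le _ _)
    by_cases hzb : z ≤ b
    · exact Or.inl hzb
    · exact Or.inr ⟨hb.1.trans (not_le.1 hzb).le, hz.trans ha.2⟩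
  have hx : ∀ y, x ∈ I y := fun y =>
    ⟨by linarith [abs_nonneg (y - x)], by linarith [abs_nonneg (y - x)]⟩
  have hy : ∀ y, y ∈ I y := fun y =>
    ⟨by linarith [neg_abs_le (y - x)], by linarith [le_abs_self (y - x)]⟩
  refine tendsto_of_tendsto_of_tendsto_of_le_of_le (g := fun y => μ (Iic x) - μ (I y))
    (h := fun y => μ (Iic x) + μ (I y)) ?_ ?_
    (fun y => tsub_le_iff_right.2 (hcover y _ (hx y) _ (hy y)))
    (fun y => hcover y _ (hy y) _ (hx y))
  · simpa using ENNReal.Tendsto.sub tendsto_const_nhds hI (.inl (measure_ne_top _ _))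
  · simpa using tendsto_const_nhds.add hI

theorem tendsto_measure_Iic_atBot {μ : Measure ℝ} [IsFiniteMeasure μ] :
    Tendsto (fun x => μ (Iic x)) atBot (𝓝 0) := by
  have h := tendsto_measure_iInter_atBot (μ := μ) (fun x => measurableSet_Iic.nullMeasurableSet)
    (monotone_Iic (α := ℝ)) ⟨0, measure_ne_top _ _⟩
  rwa [iInter_Iic_eq_empty_iff.2 (by simp), measure_empty] at h

/-- For `t < μ univ` the level set `{x | μ (Iic x) = t}` is nonempty by the intermediate value
theorem, and `{x | t < μ (Iic x)}` is the open ray above its supremum. -/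
theorem measure_lt_measure_Iic {μ : Measure ℝ} [IsFiniteMeasure μ] [NullSingletonClass μ]
    {t : ℝ≥0∞} (ht : 0 < t) : μ {x | t < μ (Iic x)} = μ univ - t := by
  set F : ℝ → ℝ≥0∞ := fun x => μ (Iic x)
  have hFmono : Monotone F := fun _ _ h => measure_mono (Iic_subset_Iic.2 h)
  rcases le_or_gt (μ univ) t with hM | hM
  · rw [tsub_eq_zero_of_le hM, ← measure_empty (μ := μ)]
    congr
    exact eq_empty_of_forall_notMem fun x hx =>
      (hx.trans_le ((measure_mono (subset_univ _)).trans hM)).false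
  obtain ⟨a, ha⟩ : ∃ a, F a < t :=
    (tendsto_measure_Iic_atBot.eventually (gt_mem_nhds ht)).exists
  obtain ⟨b, hb⟩ : ∃ b, t < F b :=
    ((tendsto_measure_Iic_atTop μ).eventually (lt_mem_nhds hM)).exists
  set S := F ⁻¹' {t}
  have hSne : S.Nonempty := intermediate_value_univ a b continuous_measure_Iic ⟨ha.le, hb.le⟩
  have hSbdd : BddAbove S := ⟨b, fun x hx => le_of_not_gt fun hbx =>
    (hb.trans_le (hFmono hbx.le)).ne' hx⟩
  have hc : F (sSup S) = t :=
    (isClosed_singleton.preimage continuous_measure_Iic).csSup_mem hSne hSbdd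
  have hset : {x | t < F x} = Ioi (sSup S) := by
    ext x
    refine ⟨fun h => not_le.1 fun hx => (hFmono hx).not_gt (hc ▸ h), fun h => ?_⟩
    have hle : t ≤ F x := hc ▸ hFmono h.le
    exact hle.lt_of_ne fun he => (le_csSup hSbdd (show F x = t from he.symm)).not_gt h
  rw [hset, ← compl_Iic, measure_compl measurableSet_Iic (measure_ne_top _ _)]
  exact congrArg _ hc

theorem setLIntegral_Ioc_zero_ofReal_rpow_sub_one {m p : ℝ} (hm : 0 ≤ m) (hp : 0 < p) :
    ∫⁻ s in Ioc 0 m, ENNReal.ofReal (s ^ (p - 1)) = ENNReal.ofReal (m ^ p / p) := by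
  have hint : IntervalIntegrable (fun s : ℝ => s ^ (p - 1)) volume 0 m :=
    intervalIntegral.intervalIntegrable_rpow' (by linarith)
  rw [← ofReal_integral_eq_lintegral_ofReal
    ((intervalIntegrable_iff_integrableOn_Ioc_of_le hm).1 hint)
    ((ae_restrict_iff' measurableSet_Ioc).2 (ae_of_all _ fun s hs => Real.rpow_nonneg hs.1.le _)),
    ← intervalIntegral.integral_of_le hm, integral_rpow (.inl (by linarith))]
  simp [Real.zero_rpow hp.ne']

theorem rpow_measure_univ_eq_lintegral {μ : Measure ℝ} [IsFiniteMeasure μ]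
    [NullSingletonClass μ] {q : ℝ} (hq : 1 < q) :
    μ univ ^ q = ENNReal.ofReal q * ∫⁻ x, μ (Iic x) ^ (q - 1) ∂μ := by
  set m := (μ univ).toReal
  have hm : 0 ≤ m := toReal_nonneg
  have hdist : ∀ t > (0 : ℝ), μ {x | t < (μ (Iic x)).toReal} =
      volume.restrict (Ioc 0 m) {s | t < s} := by
    intro t ht
    have hset : {x | t < (μ (Iic x)).toReal} = {x | ENNReal.ofReal t < μ (Iic x)} := by
      ext x
      exact (ofReal_lt_iff_lt_toReal ht.le (measure_ne_top _ _)).symm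
    rw [hset, measure_lt_measure_Iic (ofReal_pos.2 ht), show {s : ℝ | t < s} = Ioi t from rfl,
      Measure.restrict_apply measurableSet_Ioi, inter_comm, Ioc_inter_Ioi, max_eq_right ht.le,
      Real.volume_Ioc, ENNReal.ofReal_sub _ ht.le, ofReal_toReal (measure_ne_top _ _)]
  have hlayer : ∫⁻ x, μ (Iic x) ^ (q - 1) ∂μ = ∫⁻ s in Ioc 0 m, ENNReal.ofReal (s ^ (q - 1)) := by
    calc ∫⁻ x, μ (Iic x) ^ (q - 1) ∂μ
        = ∫⁻ x, ENNReal.ofReal ((μ (Iic x)).toReal ^ (q - 1)) ∂μ := by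
          refine lintegral_congr fun x => ?_
          rw [← ofReal_rpow_of_nonneg toReal_nonneg (by linarith),
            ofReal_toReal (measure_ne_top _ _)]
      _ = ENNReal.ofReal (q - 1) * ∫⁻ t in Ioi 0,
            volume.restrict (Ioc 0 m) {s | t < s} * ENNReal.ofReal (t ^ (q - 1 - 1)) := by
          rw [lintegral_rpow_eq_lintegral_meas_lt_mul μ (ae_of_all _ fun _ => toReal_nonneg)
            continuous_measure_Iic.measurable.ennreal_toReal.aemeasurable (by linarith)]
          congr 1
          exact setLIntegral_congr_fun measurableSet_Ioi fun t ht => by rw [hdist t ht]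
      _ = ∫⁻ s in Ioc 0 m, ENNReal.ofReal (s ^ (q - 1)) :=
          (lintegral_rpow_eq_lintegral_meas_lt_mul _ (f := id)
            ((ae_restrict_iff' measurableSet_Ioc).2 (ae_of_all _ fun s hs => hs.1.le))
            aemeasurable_id (by linarith)).symm
  rw [hlayer, setLIntegral_Ioc_zero_ofReal_rpow_sub_one hm (by linarith),
    ← ofReal_mul (by linarith), mul_div_cancel₀ _ (by linarith),
    ← ofReal_rpow_of_nonneg hm (by linarith), ofReal_toReal (measure_ne_top _ _)]

theorem rpow_measure_Ioc_eq_setLIntegral {ν : Measure ℝ} [NullSingletonClass ν] {q : ℝ}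
    (hq : 1 < q) {a r : ℝ} (hr : ν (Ioc a r) ≠ ∞) :
    ν (Ioc a r) ^ q = ENNReal.ofReal q * ∫⁻ s in Ioc a r, ν (Ioc a s) ^ (q - 1) ∂ν := by
  have : IsFiniteMeasure (ν.restrict (Ioc a r)) := isFiniteMeasure_restrict.2 hr
  rw [← Measure.restrict_apply_univ, rpow_measure_univ_eq_lintegral hq]
  congr 1
  refine setLIntegral_congr_fun measurableSet_Ioc fun s hs => ?_
  rw [Measure.restrict_apply measurableSet_Iic, Iic_inter_Ioc_of_le hs.2]

theorem lintegral_mul_setLIntegral_Ioc_swap {μ ν : Measure ℝ} [SFinite μ] [SFinite ν]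
    {f g : ℝ → ℝ≥0∞} (hf : Measurable f) (hg : Measurable g) (a : ℝ) :
    ∫⁻ r in Ioi a, f r * ∫⁻ s in Ioc a r, g s ∂ν ∂μ =
      ∫⁻ s in Ioi a, g s * ∫⁻ r in Ici s, f r ∂μ ∂ν := by
  set k : ℝ × ℝ → ℝ≥0∞ := {p | p.2 ≤ p.1}.indicator fun p => f p.1 * g p.2
  have hk : Measurable k := ((hf.comp measurable_fst).mul (hg.comp measurable_snd)).indicator
    (measurableSet_le measurable_snd measurable_fst)
  calc ∫⁻ r in Ioi a, f r * ∫⁻ s in Ioc a r, g s ∂ν ∂μ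
      = ∫⁻ r in Ioi a, ∫⁻ s in Ioi a, k (r, s) ∂ν ∂μ := by
        refine lintegral_congr fun r => ?_
        change _ = ∫⁻ s in Ioi a, (Iic r).indicator (fun s => f r * g s) s ∂ν
        rw [lintegral_indicator measurableSet_Iic, Measure.restrict_restrict measurableSet_Iic,
          inter_comm, Ioi_inter_Iic, lintegral_const_mul _ hg]
    _ = ∫⁻ s in Ioi a, ∫⁻ r in Ioi a, k (r, s) ∂μ ∂ν := lintegral_lintegral_swap hk.aemeasurable
    _ = ∫⁻ s in Ioi a, g s * ∫⁻ r in Ici s, f r ∂μ ∂ν := by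
        refine setLIntegral_congr_fun measurableSet_Ioi fun s hs => ?_
        change ∫⁻ r in Ioi a, (Ici s).indicator (fun r => f r * g s) r ∂μ = _
        rw [lintegral_indicator measurableSet_Ici, Measure.restrict_restrict measurableSet_Ici,
          inter_eq_left.2 (Ici_subset_Ioi.2 hs), lintegral_mul_const _ hf, mul_comm]

theorem lintegral_pow_integration_by_parts_general
    (q : ℝ) (hq : 1 < q)
    (G W : ℝ → ℝ≥0∞) (hG : Measurable G) (hW : Measurable W)
    (hGloc : ∀ r : ℝ, 0 < r → (∫⁻ s in Ioc (0 : ℝ) r, G s) < ∞) :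
    ∫⁻ r in Ioi (0 : ℝ), W r * (∫⁻ s in Ioc (0 : ℝ) r, G s) ^ q =
      ENNReal.ofReal q *
        ∫⁻ s in Ioi (0 : ℝ),
          G s * (∫⁻ r in Ioc (0 : ℝ) s, G r) ^ (q - 1) * (∫⁻ r in Ioi s, W r) := by
  set Φ : ℝ → ℝ≥0∞ := fun s => ∫⁻ u in Ioc 0 s, G u
  have hΦ : Monotone Φ := fun _ _ h => lintegral_mono_set (Ioc_subset_Ioc_right h)
  have hpow : ∀ r, 0 < r → Φ r ^ q = ENNReal.ofReal q * ∫⁻ s in Ioc 0 r, G s * Φ s ^ (q - 1) := by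
    intro r hr
    have h := rpow_measure_Ioc_eq_setLIntegral (ν := volume.withDensity G) hq (a := 0) (r := r)
      (by rw [withDensity_apply _ measurableSet_Ioc]; exact (hGloc r hr).ne)
    simp only [withDensity_apply _ measurableSet_Ioc] at h
    rwa [setLIntegral_withDensity_eq_setLIntegral_mul _ hG (hΦ.measurable.pow_const _)
      measurableSet_Ioc] at h
  calc ∫⁻ r in Ioi 0, W r * Φ r ^ q
      = ∫⁻ r in Ioi 0, ENNReal.ofReal q * (W r * ∫⁻ s in Ioc 0 r, G s * Φ s ^ (q - 1)) :=
        setLIntegral_congr_fun measurableSet_Ioi fun r hr => by rw [hpow r hr, mul_left_comm]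
    _ = ENNReal.ofReal q * ∫⁻ s in Ioi 0, G s * Φ s ^ (q - 1) * ∫⁻ r in Ici s, W r := by
        rw [lintegral_const_mul' _ _ ofReal_ne_top,
          lintegral_mul_setLIntegral_Ioc_swap (g := fun s => G s * Φ s ^ (q - 1)) hW
            (hG.mul (hΦ.measurable.pow_const _))]
    _ = ENNReal.ofReal q * ∫⁻ s in Ioi 0, G s * Φ s ^ (q - 1) * ∫⁻ r in Ioi s, W r := by
        simp_rw [setLIntegral_congr Ioi_ae_eq_Ici]

/-- Theorem (a one-dimensional integration-by-parts identity): for `1 < q < ∞`,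
`G : (0,∞) → [0,∞)` measurable and locally integrable and `W : (0,∞) → [0,∞]`
measurable, one has
`∫₀^∞ W(r) (∫₀^r G(s) ds)^q dr = q ∫₀^∞ G(s) (∫₀^s G(r) dr)^{q-1} (∫_s^∞ W(r) dr) ds`,
both sides being Lebesgue integrals valued in `[0,∞]`. -/
theorem lintegral_pow_integration_by_parts
    (q : ℝ) (hq : 1 < q)
    (G W : ℝ → ℝ≥0∞) (hG : Measurable G) (hW : Measurable W)
    (hGfin : ∀ s, G s ≠ ∞)
    (hGloc : ∀ r : ℝ, 0 < r → (∫⁻ s in Ioc (0 : ℝ) r, G s) < ∞) :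
    ∫⁻ r in Ioi (0 : ℝ), W r * (∫⁻ s in Ioc (0 : ℝ) r, G s) ^ q =
      ENNReal.ofReal q *
        ∫⁻ s in Ioi (0 : ℝ),
          G s * (∫⁻ r in Ioc (0 : ℝ) s, G r) ^ (q - 1) * (∫⁻ r in Ioi s, W r) :=
  lintegral_pow_integration_by_parts_general q hq G W hG hW hGloc
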